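/- Let k ≥ 2 be a fixed integer. Then for every integer k-full number l > 1, f_k(l) ≤ 2^{ω(l)} d(l) l^{1/2} ≤ d(l)² l^{1/2}, where ω(l) is the number of distinct prime factors of l. In particular, for a prime power p^α with α ≥ k one has f_k(p^α) ≤ 2(α+1) p^{α/2}. -/

import Mathlib

open Real Filter
open scoped Classical

noncomputable section

/-- `tau n` is the number of divisors of `n`. -/
def tau (n : ℕ) : ℕ := n.divisors.card

/-- `n` is `k`-full: every prime dividing `n` divides it with multiplicity at least `k`. -/
def IsKFull (k n : ℕ) : Prop := ∀ p : ℕ, p.Prime → p ∣ n → p ^ k ∣ n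

/-- `f_k(m) = ∑_{m = n d^k} d(n) d^(k/2)`. -/
def fk (k m : ℕ) : ℝ :=
  ∑ d ∈ m.divisors, if d ^ k ∣ m then
    (tau (m / d ^ k) : ℝ) * (d : ℝ) ^ ((k : ℝ) / 2)
  else 0

namespace FkAux

open Finset ArithmeticFunction
open scoped ArithmeticFunction.sigma

noncomputable def hfun (k : ℕ) : ArithmeticFunction ℝ :=
  ⟨fun e => if ∃ d : ℕ, d ^ k = e then Real.sqrt e else 0,
   by simp⟩

lemma hfun_apply (k e : ℕ) :
    hfun k e = if ∃ d : ℕ, d ^ k = e then Real.sqrt e else 0 := rfl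

lemma hfun_mult (k : ℕ) : (hfun k).IsMultiplicative := by
  constructor
  · rw [hfun_apply, if_pos ⟨1, one_pow k⟩]; simp
  · intro m n cop
    rw [hfun_apply, hfun_apply, hfun_apply]
    by_cases hm : ∃ a : ℕ, a ^ k = m
    · by_cases hn : ∃ b : ℕ, b ^ k = n
      · obtain ⟨a, ha⟩ := hm
        obtain ⟨b, hb⟩ := hn
        rw [if_pos ⟨a*b, by rw [mul_pow, ha, hb]⟩, if_pos ⟨a, ha⟩, if_pos ⟨b, hb⟩]
        push_cast
        rw [Real.sqrt_mul (by positivity)]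
      · have hmn : ¬ ∃ d : ℕ, d ^ k = m * n := by
          rintro ⟨c, hc⟩
          exact hn (Exists.imp (fun b hb => hb.symm) (exists_eq_pow_of_mul_eq_pow
            (Nat.isUnit_iff.mpr cop.symm) (by rw [mul_comm]; exact hc.symm)))
        rw [if_neg hmn, if_neg hn, mul_zero]
    · have hmn : ¬ ∃ d : ℕ, d ^ k = m * n := by
        rintro ⟨c, hc⟩
        exact hm (Exists.imp (fun b hb => hb.symm) (exists_eq_pow_of_mul_eq_pow
          (Nat.isUnit_iff.mpr cop) hc.symm))
      rw [if_neg hmn, if_neg hm, zero_mul]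

noncomputable def Fk (k : ℕ) : ArithmeticFunction ℝ :=
  hfun k * ((σ 0 : ArithmeticFunction ℕ) : ArithmeticFunction ℝ)

lemma Fk_mult (k : ℕ) : (Fk k).IsMultiplicative :=
  (hfun_mult k).mul (isMultiplicative_sigma.natCast)

lemma rpow_half (d k : ℕ) : (d : ℝ) ^ ((k : ℝ) / 2) = Real.sqrt ((d ^ k : ℕ) : ℝ) := by
  rw [Real.sqrt_eq_rpow]
  push_cast
  rw [← Real.rpow_natCast (d:ℝ) k, ← Real.rpow_mul (by positivity),
    show (k:ℝ) * (1/2) = (k:ℝ)/2 by ring]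

lemma fk_eq_Fk (k : ℕ) (hk : 1 ≤ k) (m : ℕ) (hm : m ≠ 0) : fk k m = Fk k m := by
  rw [fk, Fk, mul_apply, ← Finset.sum_filter]
  have h1 : ∑ x ∈ m.divisorsAntidiagonal, hfun k x.1 * ((σ 0 : ArithmeticFunction ℕ) :
      ArithmeticFunction ℝ) x.2
      = ∑ x ∈ m.divisorsAntidiagonal.filter (fun x => ∃ d : ℕ, d ^ k = x.1),
        hfun k x.1 * ((σ 0 : ArithmeticFunction ℕ) : ArithmeticFunction ℝ) x.2 := by
    convert (Finset.sum_filter_of_ne fun x hx hne => ?_).symm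
    by_contra h
    rw [hfun_apply, if_neg h, zero_mul] at hne
    exact hne rfl
  rw [h1]
  refine Finset.sum_nbij (fun d => (d ^ k, m / d ^ k)) ?_ ?_ ?_ ?_
  · intro d hd
    simp only [Finset.mem_filter, Nat.mem_divisors, Nat.mem_divisorsAntidiagonal] at hd ⊢
    exact ⟨⟨Nat.mul_div_cancel' hd.2, hm⟩, ⟨d, rfl⟩⟩
  · intro a _ b _ hab
    have h' : a ^ k = b ^ k := congrArg Prod.fst hab
    exact Nat.pow_left_injective (Nat.one_le_iff_ne_zero.mp hk) h'
  · intro x hx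
    simp only [Finset.coe_filter, Nat.mem_divisorsAntidiagonal, Set.mem_setOf_eq] at hx
    obtain ⟨⟨hxm, _⟩, d, hd⟩ := hx
    refine ⟨d, ?_, ?_⟩
    · simp only [Finset.coe_filter, Nat.mem_divisors, Set.mem_setOf_eq]
      have hdvd : d ^ k ∣ m := ⟨x.2, by rw [hd, hxm]⟩
      exact ⟨⟨dvd_trans (dvd_pow_self d (Nat.one_le_iff_ne_zero.mp hk)) hdvd, hm⟩, hdvd⟩
    · have hx1 : 0 < x.1 := Nat.pos_of_ne_zero fun h0 => hm (by rw [← hxm, h0, zero_mul])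
      have h2 : m / d ^ k = x.2 := by
        rw [hd, ← hxm, Nat.mul_div_cancel_left _ hx1]
      exact Prod.ext hd h2
  · intro d hd
    simp only [Finset.mem_filter, Nat.mem_divisors] at hd
    rw [hfun_apply, if_pos ⟨d, rfl⟩, rpow_half, natCoe_apply, sigma_zero_apply]
    rw [mul_comm]
    rfl

lemma tau_prime_pow (p : ℕ) (hp : p.Prime) (i : ℕ) : tau (p ^ i) = i + 1 := by
  rw [tau, Nat.divisors_prime_pow hp, Finset.card_map, Finset.card_range]

lemma mygeom_le (x : ℝ) (hx : 2 ≤ x) (J : ℕ) :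
    ∑ j ∈ Finset.range (J + 1), x ^ j ≤ 2 * x ^ J := by
  induction J with
  | zero => norm_num
  | succ J ih =>
    rw [Finset.sum_range_succ]
    nlinarith [pow_nonneg (show (0:ℝ) ≤ x by linarith) J,
      pow_nonneg (show (0:ℝ) ≤ x by linarith) (J+1), pow_succ x J]

lemma fk_nonneg (k m : ℕ) : 0 ≤ fk k m := by
  apply Finset.sum_nonneg
  intro d _
  split
  · positivity
  · exact le_refl (0:ℝ)

lemma fk_prime_pow_le (k : ℕ) (hk : 2 ≤ k) (p : ℕ) (hp : p.Prime) (α : ℕ) :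
    fk k (p ^ α) ≤ 2 * ((α : ℝ) + 1) * (p : ℝ) ^ ((α : ℝ) / 2) := by
  have hk1 : 1 ≤ k := le_trans (by norm_num) hk
  have hp1 : (1:ℝ) ≤ p := by exact_mod_cast hp.one_lt.le
  set x : ℝ := (p : ℝ) ^ ((k : ℝ) / 2) with hxdef
  have hxj : ∀ j : ℕ, ((p ^ j : ℕ) : ℝ) ^ ((k : ℝ) / 2) = x ^ j := by
    intro j
    push_cast
    rw [← Real.rpow_natCast (p:ℝ) j, ← Real.rpow_mul (by positivity), hxdef,
      ← Real.rpow_natCast ((p:ℝ) ^ ((k:ℝ)/2)) j, ← Real.rpow_mul (by positivity), mul_comm]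
  have hx2 : 2 ≤ x := by
    calc (2:ℝ) = 2 ^ (1:ℝ) := by norm_num
    _ ≤ (2:ℝ) ^ ((k:ℝ)/2) := by
        apply Real.rpow_le_rpow_of_exponent_le (by norm_num)
        have : (2:ℝ) ≤ (k:ℝ) := by exact_mod_cast hk
        linarith
    _ ≤ x := Real.rpow_le_rpow (by norm_num) (by exact_mod_cast hp.two_le) (by positivity)
  have hx0 : (0:ℝ) ≤ x := by linarith
  set J := α / k with hJ
  have hstep : fk k (p ^ α) ≤ ∑ j ∈ Finset.range (J + 1), ((α:ℝ) + 1) * x ^ j := by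
    rw [fk, Nat.divisors_prime_pow hp, Finset.sum_map]
    simp only [Function.Embedding.coeFn_mk]
    refine le_trans (Finset.sum_le_sum (g := fun j => if j * k ≤ α then ((α:ℝ) + 1) * x ^ j else 0)
      ?_) (le_of_eq ?_)
    · intro j _
      rw [← pow_mul]
      by_cases hjk : j * k ≤ α
      · rw [if_pos (pow_dvd_pow p hjk), if_pos hjk, Nat.pow_div hjk hp.pos,
          tau_prime_pow p hp, hxj]
        apply mul_le_mul_of_nonneg_right _ (pow_nonneg hx0 j)
        · push_cast
          have : α - j * k ≤ α := Nat.sub_le _ _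
          have := (Nat.cast_le (α := ℝ)).mpr this
          linarith
      · rw [if_neg (fun hdvd => hjk ((Nat.pow_dvd_pow_iff_le_right hp.one_lt).mp hdvd)),
          if_neg hjk]
    · rw [← Finset.sum_filter]
      apply Finset.sum_congr _ (fun _ _ => rfl)
      ext j
      simp only [Finset.mem_filter, Finset.mem_range, Nat.lt_succ_iff]
      constructor
      · rintro ⟨_, h⟩; exact Nat.le_div_iff_mul_le (by omega) |>.mpr h
      · intro h
        have h' := (Nat.le_div_iff_mul_le (show 0 < k by omega)).mp h
        exact ⟨le_trans (Nat.le_mul_of_pos_right j (by omega)) h', h'⟩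
  have hgeom : ∑ j ∈ Finset.range (J + 1), ((α:ℝ) + 1) * x ^ j
      ≤ ((α:ℝ) + 1) * (2 * x ^ J) := by
    rw [← Finset.mul_sum]
    exact mul_le_mul_of_nonneg_left (mygeom_le x hx2 J) (by positivity)
  have hxJ : x ^ J ≤ (p : ℝ) ^ ((α : ℝ) / 2) := by
    rw [hxdef, ← Real.rpow_natCast ((p:ℝ) ^ ((k:ℝ)/2)) J, ← Real.rpow_mul (by positivity)]
    apply Real.rpow_le_rpow_of_exponent_le hp1
    have hJk : (J * k : ℕ) ≤ α := Nat.div_mul_le_self α k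
    have : ((J * k : ℕ) : ℝ) ≤ (α : ℝ) := by exact_mod_cast hJk
    push_cast at this ⊢
    linarith
  calc fk k (p ^ α) ≤ ((α:ℝ) + 1) * (2 * x ^ J) := le_trans hstep hgeom
    _ ≤ ((α:ℝ) + 1) * (2 * (p : ℝ) ^ ((α : ℝ) / 2)) := by
        apply mul_le_mul_of_nonneg_left _ (by positivity)
        linarith
    _ = 2 * ((α : ℝ) + 1) * (p : ℝ) ^ ((α : ℝ) / 2) := by ring

lemma prod_sqrt {ι : Type*} (s : Finset ι) (f : ι → ℕ) :
    ∏ i ∈ s, Real.sqrt (f i) = Real.sqrt ((∏ i ∈ s, f i : ℕ) : ℝ) := by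
  induction s using Finset.cons_induction with
  | empty => simp
  | cons a s ha ih =>
    rw [Finset.prod_cons, Finset.prod_cons, ih]
    push_cast
    rw [Real.sqrt_mul (by positivity)]

end FkAux

open FkAux Finset ArithmeticFunction in
/-- Bounds for `f_k` on `k`-full numbers and on prime powers `p^α` with `α ≥ k`. -/
theorem fk_bound_kfull (k : ℕ) (hk : 2 ≤ k) :
    (∀ l : ℕ, 1 < l → IsKFull k l →
      fk k l ≤ 2 ^ l.primeFactors.card * (tau l : ℝ) * Real.sqrt l ∧
      (2 : ℝ) ^ l.primeFactors.card * (tau l : ℝ) * Real.sqrt l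
        ≤ (tau l : ℝ) ^ 2 * Real.sqrt l) ∧
    (∀ p α : ℕ, p.Prime → k ≤ α →
      fk k (p ^ α) ≤ 2 * ((α : ℝ) + 1) * (p : ℝ) ^ ((α : ℝ) / 2)) := by
  have hk1 : 1 ≤ k := le_trans (by norm_num) hk
  constructor
  · intro l hl _
    have hl0 : l ≠ 0 := by omega
    constructor
    · rw [fk_eq_Fk k hk1 l hl0, (Fk_mult k).multiplicative_factorization _ hl0,
        Finsupp.prod, Nat.support_factorization]
      have hfacpos : ∀ p ∈ l.primeFactors, 1 ≤ l.factorization p := fun p hp =>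
        Nat.Prime.factorization_pos_of_dvd (Nat.prime_of_mem_primeFactors hp) hl0
          (Nat.dvd_of_mem_primeFactors hp)
      calc ∏ p ∈ l.primeFactors, Fk k (p ^ l.factorization p)
          ≤ ∏ p ∈ l.primeFactors,
            (2 * ((l.factorization p : ℝ) + 1) * (p : ℝ) ^ ((l.factorization p : ℝ) / 2)) := by
            apply Finset.prod_le_prod
            · intro p hp
              rw [← fk_eq_Fk k hk1 _
                (pow_ne_zero _ (Nat.prime_of_mem_primeFactors hp).pos.ne')]
              exact fk_nonneg k _
            · intro p hp
              rw [← fk_eq_Fk k hk1 _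
                (pow_ne_zero _ (Nat.prime_of_mem_primeFactors hp).pos.ne')]
              exact fk_prime_pow_le k hk p (Nat.prime_of_mem_primeFactors hp) _
        _ = 2 ^ l.primeFactors.card * (tau l : ℝ) * Real.sqrt l := by
            rw [Finset.prod_mul_distrib, Finset.prod_mul_distrib, Finset.prod_const]
            congr 1
            · congr 1
              rw [tau, Nat.card_divisors hl0]
              push_cast
              rfl
            · have : ∀ p ∈ l.primeFactors,
                  (p : ℝ) ^ ((l.factorization p : ℝ) / 2)
                  = Real.sqrt ((p ^ l.factorization p : ℕ) : ℝ) := fun p _ =>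
                rpow_half p (l.factorization p)
              rw [Finset.prod_congr rfl this, prod_sqrt]
              congr 2
              conv_rhs => rw [← Nat.factorization_prod_pow_eq_self hl0]
              rw [Finsupp.prod, Nat.support_factorization]
    · have h2 : (2 : ℝ) ^ l.primeFactors.card ≤ (tau l : ℝ) := by
        have hn : 2 ^ l.primeFactors.card ≤ tau l := by
          rw [tau, Nat.card_divisors hl0, ← Finset.prod_const]
          apply Finset.prod_le_prod'
          intro p hp
          have := Nat.Prime.factorization_pos_of_dvd (Nat.prime_of_mem_primeFactors hp) hl0
            (Nat.dvd_of_mem_primeFactors hp)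
          omega
        exact_mod_cast hn
      have hτ : (0:ℝ) ≤ (tau l : ℝ) := by positivity
      have hs : (0:ℝ) ≤ Real.sqrt l := Real.sqrt_nonneg _
      calc (2 : ℝ) ^ l.primeFactors.card * (tau l : ℝ) * Real.sqrt l
          ≤ (tau l : ℝ) * (tau l : ℝ) * Real.sqrt l :=
            mul_le_mul_of_nonneg_right (mul_le_mul_of_nonneg_right h2 hτ) hs
        _ = (tau l : ℝ) ^ 2 * Real.sqrt l := by ring
  · intro p α hp _
    exact fk_prime_pow_le k hk p hp α
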